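/- For matrices T₁, T₂ ∈ ℝ^{m×n} and any p with 1 ≤ p < ∞, ‖T₁^⊤T₁ + T₂^⊤T₂‖_p^p ≥ ‖T₁^⊤T₁‖_p^p + ‖T₂^⊤T₂‖_p^p. Equivalently, if T = P_U A + P_{U⊥} B with T₁ = P_U T, T₂ = P_{U⊥} T, then ‖T‖_{2p}^{2p} ≥ ‖T₁‖_{2p}^{2p} + ‖T₂‖_{2p}^{2p}. -/

import Mathlib

open scoped ENNReal
open Matrix

/-- The `i`-th largest singular value (0-indexed) of a real matrix. -/
noncomputable def sval {m n : ℕ} (A : Matrix (Fin m) (Fin n) ℝ) : ℕ → ℝ := fun i =>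
  if h : i < n then
    Real.sqrt ((show (Aᵀ * A).IsHermitian by rw [← Matrix.conjTranspose_eq_transpose_of_trivial]; exact Matrix.isHermitian_conjTranspose_mul_self A).eigenvalues
      (Tuple.sort ((show (Aᵀ * A).IsHermitian by rw [← Matrix.conjTranspose_eq_transpose_of_trivial]; exact Matrix.isHermitian_conjTranspose_mul_self A).eigenvalues) ⟨n - 1 - i, by omega⟩))
  else 0

/-- Truncated Schatten-q norm (ℓ_q norm of the top `r` singular values), q ∈ [1,∞]. -/
noncomputable def schattenTE {m n : ℕ} (q : ℝ≥0∞) (r : ℕ) (A : Matrix (Fin m) (Fin n) ℝ) : ℝ :=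
  if q = ∞ then sval A 0
  else (∑ i ∈ Finset.range r, sval A i ^ q.toReal) ^ (1 / q.toReal)

/-- Schatten-q norm, q ∈ [1,∞]. -/
noncomputable def schattenE {m n : ℕ} (q : ℝ≥0∞) (A : Matrix (Fin m) (Fin n) ℝ) : ℝ :=
  schattenTE q n A

/-- Truncated Schatten-q norm for a real exponent q. -/
noncomputable def schattenTR {m n : ℕ} (q : ℝ) (r : ℕ) (A : Matrix (Fin m) (Fin n) ℝ) : ℝ :=
  (∑ i ∈ Finset.range r, sval A i ^ q) ^ (1 / q)

/-- Schatten-q norm for a real exponent q. -/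
noncomputable def schattenR {m n : ℕ} (q : ℝ) (A : Matrix (Fin m) (Fin n) ℝ) : ℝ :=
  schattenTR q n A

/-- `Ahat` is a best rank-`r` approximation of `B` (in Frobenius norm). -/
def IsBestRankApprox {m n : ℕ} (r : ℕ) (B Ahat : Matrix (Fin m) (Fin n) ℝ) : Prop :=
  Ahat.rank ≤ r ∧ ∀ M : Matrix (Fin m) (Fin n) ℝ, M.rank ≤ r →
    schattenR 2 (B - Ahat) ≤ schattenR 2 (B - M)

section Aux
open MeasureTheory Set

variable {n : ℕ}



noncomputable def mcI (s : ℝ) : ℝ := ∫ t in Ioi (0:ℝ), t ^ (s-1) / (1 + t)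

lemma mc_kernel_cont {μ : ℝ} (hμ : 0 ≤ μ) {s : ℝ} :
    ContinuousOn (fun t : ℝ => t ^ (s-1) * (μ / (μ + t))) (Ioi 0) := by
  apply ContinuousOn.mul
  · exact fun t ht => (Real.continuousAt_rpow_const t _ (Or.inl (ne_of_gt ht))).continuousWithinAt
  · apply ContinuousOn.div continuousOn_const (continuousOn_const.add (continuousOn_id))
    intro t ht
    have h := mem_Ioi.mp ht
    have : (0:ℝ) < μ + t := by linarith
    exact ne_of_gt this

lemma mc_kernel_integrable {s : ℝ} (hs0 : 0 < s) (hs1 : s < 1) {μ : ℝ} (hμ : 0 ≤ μ) :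
    IntegrableOn (fun t : ℝ => t ^ (s-1) * (μ / (μ + t))) (Ioi 0) := by
  have hcont := mc_kernel_cont hμ (s := s)
  have h1 : IntegrableOn (fun t : ℝ => t ^ (s-1) * (μ / (μ + t))) (Ioc 0 1) := by
    have hint : IntegrableOn (fun t : ℝ => t ^ (s-1)) (Ioc 0 1) := by
      have := intervalIntegral.intervalIntegrable_rpow' (a := 0) (b := 1) (r := s - 1)
        (by linarith)
      rwa [intervalIntegrable_iff_integrableOn_Ioc_of_le zero_le_one] at this
    apply Integrable.mono hint
      ((hcont.mono Ioc_subset_Ioi_self).aestronglyMeasurable measurableSet_Ioc)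
    filter_upwards [ae_restrict_mem measurableSet_Ioc] with t ht
    have ht0 : (0:ℝ) < t := ht.1
    have hμt : (0:ℝ) < μ + t := by linarith
    rw [Real.norm_eq_abs, Real.norm_eq_abs, abs_of_nonneg (Real.rpow_nonneg ht0.le _),
      abs_of_nonneg (by positivity)]
    nth_rewrite 2 [← mul_one (t ^ (s-1))]
    apply mul_le_mul_of_nonneg_left _ (Real.rpow_nonneg ht0.le _)
    rw [div_le_one hμt]; linarith
  have h2 : IntegrableOn (fun t : ℝ => t ^ (s-1) * (μ / (μ + t))) (Ioi 1) := by
    have hint : IntegrableOn (fun t : ℝ => μ * t ^ (s-2)) (Ioi 1) := by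
      have := (integrableOn_Ioi_rpow_of_lt (a := s-2) (by linarith) (c := 1) one_pos).smul μ
      exact MeasureTheory.IntegrableOn.congr_fun this (fun t ht => by simp [smul_eq_mul]) measurableSet_Ioi
    apply Integrable.mono hint
      ((hcont.mono (Ioi_subset_Ioi zero_le_one)).aestronglyMeasurable measurableSet_Ioi)
    filter_upwards [ae_restrict_mem measurableSet_Ioi] with t ht
    have ht1 : (1:ℝ) < t := ht
    have ht0 : (0:ℝ) < t := by linarith
    have hμt : (0:ℝ) < μ + t := by linarith
    rw [Real.norm_eq_abs, Real.norm_eq_abs, abs_of_nonneg (by positivity),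
      abs_of_nonneg (by positivity)]
    have hts : t ^ (s-2) = t ^ (s-1) * t⁻¹ := by
      rw [← Real.rpow_neg_one t, ← Real.rpow_add ht0]; ring_nf
    rw [hts]
    have : t ^ (s-1) * (μ / (μ + t)) ≤ t ^ (s-1) * (μ / t) := by
      gcongr
      linarith
    calc t ^ (s-1) * (μ / (μ + t)) ≤ t ^ (s-1) * (μ / t) := this
      _ = μ * (t ^ (s-1) * t⁻¹) := by ring
  have : Ioi (0:ℝ) = Ioc 0 1 ∪ Ioi 1 := by
    rw [Ioc_union_Ioi_eq_Ioi zero_le_one]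
  rw [this]
  exact h1.union h2

lemma mcI_integrable {s : ℝ} (hs0 : 0 < s) (hs1 : s < 1) :
    IntegrableOn (fun t : ℝ => t ^ (s-1) / (1 + t)) (Ioi 0) := by
  have := mc_kernel_integrable hs0 hs1 (μ := 1) zero_le_one
  exact MeasureTheory.IntegrableOn.congr_fun this (fun t ht => by rw [div_eq_mul_inv]; ring) measurableSet_Ioi

lemma mcI_pos {s : ℝ} (hs0 : 0 < s) (hs1 : s < 1) : 0 < mcI s := by
  rw [mcI]
  apply (setIntegral_pos_iff_support_of_nonneg_ae _ _).mpr
  · have heq : Function.support (fun t : ℝ => t ^ (s-1) / (1 + t)) ∩ Ioi 0 = Ioi 0 := by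
      apply inter_eq_right.mpr
      intro t ht
      have ht0 : (0:ℝ) < t := ht
      have : (0:ℝ) < t ^ (s-1) / (1 + t) := by positivity
      exact ne_of_gt this
    rw [heq]
    simp
  · filter_upwards [ae_restrict_mem measurableSet_Ioi] with t ht
    have ht0 : (0:ℝ) < t := ht
    positivity
  · exact mcI_integrable hs0 hs1

lemma mc_integral_kernel {s : ℝ} (hs0 : 0 < s) {μ : ℝ} (hμ : 0 ≤ μ) :
    ∫ t in Ioi (0:ℝ), t ^ (s-1) * (μ / (μ + t)) = μ ^ s * mcI s := by
  rcases eq_or_lt_of_le hμ with h | h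
  · rw [← h]
    simp [Real.zero_rpow (ne_of_gt hs0)]
  · have key := integral_comp_mul_left_Ioi (fun t : ℝ => t ^ (s-1) * (μ / (μ + t))) 0 h
    rw [mul_zero] at key
    have hg : ∀ x ∈ Ioi (0:ℝ), (fun t : ℝ => t ^ (s-1) * (μ / (μ + t))) (μ * x)
        = μ ^ (s-1) * (x ^ (s-1) / (1 + x)) := by
      intro x hx
      have hx0 : (0:ℝ) < x := hx
      have h1x : (0:ℝ) < 1 + x := by linarith
      simp only
      rw [Real.mul_rpow h.le hx0.le]
      have : μ / (μ + μ * x) = 1 / (1 + x) := by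
        rw [show μ + μ * x = μ * (1 + x) by ring, div_eq_div_iff (by positivity) (ne_of_gt h1x)]
        ring
      rw [this]
      ring
    rw [setIntegral_congr_fun measurableSet_Ioi hg] at key
    rw [integral_const_mul] at key
    -- key : ∫ x in Ioi 0, f (μ x) form rewritten; key states LHS' = μ⁻¹ • ∫ t in Ioi 0, g t
    have : ∫ t in Ioi (0:ℝ), t ^ (s-1) * (μ / (μ + t))
        = μ * (μ ^ (s-1) * ∫ x in Ioi (0:ℝ), x ^ (s-1) / (1 + x)) := by
      rw [smul_eq_mul] at key
      have hne : μ ≠ 0 := ne_of_gt h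
      field_simp at key
      have hsame : ∫ t in Ioi (0:ℝ), t ^ (s-1) * (μ / (μ + t))
          = ∫ x in Ioi (0:ℝ), x ^ (s-1) * μ / (μ + x) := by
        congr 1
        ext t
        rw [mul_div_assoc]
      rw [hsame]
      have hc : ∫ x in Ioi (0:ℝ), x ^ (s-1) * μ / (μ + x)
          = ∫ x in Ioi (0:ℝ), μ * x ^ (s-1) / (μ + x) := by
        congr 1; ext x; ring
      linarith [key, hc]
    rw [this, mcI, ← mul_assoc, ← Real.rpow_one_add' (by linarith) (by ring_nf; exact ne_of_gt hs0)]
    ring_nf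

lemma mc_weight_rpow {ι : Type*} [Fintype ι] {w μv : ι → ℝ}
    (hw : ∀ i, 0 ≤ w i) (hμ : ∀ i, 0 ≤ μv i) (hw1 : ∑ i, w i = 1)
    {lam : ℝ} (hlam : 0 ≤ lam)
    (hmean : lam ≤ ∑ i, w i * μv i)
    (hK : ∀ t : ℝ, 0 < t → ∑ i, w i / (μv i + t) ≤ 1 / (lam + t))
    {s : ℝ} (hs : 0 ≤ s) :
    lam ^ s ≤ ∑ i, w i * μv i ^ s := by
  rcases eq_or_lt_of_le hs with h0 | hs0
  · simp [← h0, hw1]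
  rcases le_or_gt 1 s with h1 | hs1
  · -- Jensen case
    have jensen := Real.rpow_arith_mean_le_arith_mean_rpow Finset.univ w μv
      (fun i _ => hw i) hw1 (fun i _ => hμ i) h1
    calc lam ^ s ≤ (∑ i, w i * μv i) ^ s := Real.rpow_le_rpow hlam hmean hs
      _ ≤ ∑ i, w i * μv i ^ s := jensen
  · -- integral case 0 < s < 1
    have hIpos := mcI_pos hs0 hs1
    have hker : ∀ i : ι, IntegrableOn (fun t : ℝ => w i * (t ^ (s-1) * (μv i / (μv i + t))))
        (Ioi 0) := fun i => (mc_kernel_integrable hs0 hs1 (hμ i)).const_mul (w i)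
    have hsumker : IntegrableOn (fun t : ℝ => ∑ i, w i * (t ^ (s-1) * (μv i / (μv i + t))))
        (Ioi 0) := integrable_finset_sum _ (fun i _ => hker i)
    have hlamker : IntegrableOn (fun t : ℝ => t ^ (s-1) * (lam / (lam + t))) (Ioi 0) :=
      mc_kernel_integrable hs0 hs1 hlam
    have hmono : ∫ t in Ioi (0:ℝ), t ^ (s-1) * (lam / (lam + t))
        ≤ ∫ t in Ioi (0:ℝ), ∑ i, w i * (t ^ (s-1) * (μv i / (μv i + t))) := by
      apply setIntegral_mono_on hlamker hsumker measurableSet_Ioi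
      intro t ht
      have ht0 : (0:ℝ) < t := ht
      have hlt : (0:ℝ) < lam + t := by linarith
      have key : 1 - t * (1 / (lam + t)) ≤ ∑ i, w i * (μv i / (μv i + t)) := by
        have expand : ∀ i : ι, w i * (μv i / (μv i + t)) = w i - t * (w i / (μv i + t)) := by
          intro i
          have hμt : (0:ℝ) < μv i + t := by have := hμ i; linarith
          field_simp
          ring
        rw [Finset.sum_congr rfl (fun i _ => expand i), Finset.sum_sub_distrib, hw1,
          ← Finset.mul_sum]
        have := hK t ht0
        nlinarith
      calc t ^ (s-1) * (lam / (lam + t)) = t ^ (s-1) * (1 - t * (1 / (lam + t))) := by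
            field_simp
            ring
          _ ≤ t ^ (s-1) * (∑ i, w i * (μv i / (μv i + t))) := by
            apply mul_le_mul_of_nonneg_left key (Real.rpow_nonneg ht0.le _)
          _ = ∑ i, w i * (t ^ (s-1) * (μv i / (μv i + t))) := by
            rw [Finset.mul_sum]
            exact Finset.sum_congr rfl (fun i _ => by ring)
    rw [mc_integral_kernel hs0 hlam] at hmono
    rw [integral_finset_sum _ (fun i _ => hker i)] at hmono
    have : ∀ i : ι, ∫ t in Ioi (0:ℝ), w i * (t ^ (s-1) * (μv i / (μv i + t)))
        = w i * (μv i ^ s * mcI s) := by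
      intro i
      rw [integral_const_mul, mc_integral_kernel hs0 (hμ i)]
    rw [Finset.sum_congr rfl (fun i _ => this i)] at hmono
    have hsum : ∑ i, w i * (μv i ^ s * mcI s) = (∑ i, w i * μv i ^ s) * mcI s := by
      rw [Finset.sum_mul]
      exact Finset.sum_congr rfl (fun i _ => by ring)
    rw [hsum] at hmono
    exact le_of_mul_le_mul_right hmono hIpos



lemma euclid_inner_dot (x y : EuclideanSpace ℝ (Fin n)) :
    (inner ℝ x y : ℝ) = dotProduct (⇑x) (⇑y) := by
  simp [PiLp.inner_apply, RCLike.inner_apply, dotProduct, mul_comm]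

lemma onb_expand (b : OrthonormalBasis (Fin n) ℝ (EuclideanSpace ℝ (Fin n)))
    (y : EuclideanSpace ℝ (Fin n)) :
    ∑ i, (dotProduct (⇑(b i)) (⇑y)) • (⇑(b i)) = ⇑y := by
  have h := b.sum_repr y
  have h2 : ∀ i, b.repr y i = dotProduct (⇑(b i)) (⇑y) := by
    intro i
    rw [b.repr_apply_apply, euclid_inner_dot]
  funext k
  calc (∑ i, (dotProduct (⇑(b i)) (⇑y)) • (⇑(b i))) k
      = ∑ i, (b.repr y i • (b i : EuclideanSpace ℝ (Fin n))) k := by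
        rw [Finset.sum_apply]
        exact Finset.sum_congr rfl fun i _ => by rw [h2]; rfl
    _ = y k := by
        have h3 := congrArg (fun v : EuclideanSpace ℝ (Fin n) => v k) h
        simp only at h3
        rw [← h3, ← Finset.sum_apply, WithLp.ofLp_sum]

lemma dot_mulVec_symm {M : Matrix (Fin n) (Fin n) ℝ} (hM : Mᵀ = M) (x y : Fin n → ℝ) :
    dotProduct x (M *ᵥ y) = dotProduct y (M *ᵥ x) := by
  rw [Matrix.dotProduct_mulVec, ← Matrix.mulVec_transpose, hM, dotProduct_comm]

lemma cs_matrix {M : Matrix (Fin n) (Fin n) ℝ} (hM : Mᵀ = M)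
    (hpsd : ∀ x : Fin n → ℝ, 0 ≤ dotProduct x (M *ᵥ x)) (x y : Fin n → ℝ) :
    (dotProduct x (M *ᵥ y))^2
      ≤ (dotProduct x (M *ᵥ x)) * (dotProduct y (M *ᵥ y)) := by
  have key : ∀ r : ℝ, 0 ≤ (dotProduct y (M *ᵥ y)) * (r * r)
      + (2 * dotProduct x (M *ᵥ y)) * r + (dotProduct x (M *ᵥ x)) := by
    intro r
    have h := hpsd (x + r • y)
    have expand : dotProduct (x + r • y) (M *ᵥ (x + r • y))
        = (dotProduct y (M *ᵥ y)) * (r * r)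
          + (2 * dotProduct x (M *ᵥ y)) * r + (dotProduct x (M *ᵥ x)) := by
      rw [Matrix.mulVec_add, Matrix.mulVec_smul]
      rw [add_dotProduct, smul_dotProduct]
      rw [dotProduct_add, dotProduct_add, dotProduct_smul,
        dotProduct_smul]
      have hsy : dotProduct y (M *ᵥ x) = dotProduct x (M *ᵥ y) :=
        dot_mulVec_symm hM y x
      simp only [smul_eq_mul]
      rw [hsy]
      ring
    rw [expand] at h
    exact h
  have hd := discrim_le_zero key
  rw [discrim] at hd
  nlinarith [hd]

lemma dot_sum_right (x : Fin n → ℝ) (v : Fin n → (Fin n → ℝ)) :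
    dotProduct x (∑ j, v j) = ∑ j, dotProduct x (v j) := by
  simp only [dotProduct, Finset.sum_apply, Finset.mul_sum]
  exact Finset.sum_comm

lemma herm_qf_expand {M : Matrix (Fin n) (Fin n) ℝ} (hM : M.IsHermitian)
    (x : Fin n → ℝ) :
    dotProduct x (M *ᵥ x)
      = ∑ j, hM.eigenvalues j * (dotProduct (⇑(hM.eigenvectorBasis j)) x)^2 := by
  set f := hM.eigenvectorBasis with hf
  set c : Fin n → ℝ := fun j => dotProduct (⇑(f j)) x with hcdef
  have hx : (∑ j, c j • ⇑(f j)) = x := onb_expand f (WithLp.toLp 2 x)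
  have hMx : M *ᵥ x = ∑ j, (c j * hM.eigenvalues j) • ⇑(f j) := by
    rw [← hx]
    rw [show M *ᵥ (∑ j, c j • ⇑(f j)) = ∑ j, c j • (M *ᵥ ⇑(f j)) by
      rw [← Matrix.mulVecLin_apply, map_sum]
      exact Finset.sum_congr rfl fun j _ => by simp [Matrix.mulVecLin_apply]]
    refine Finset.sum_congr rfl fun j _ => ?_
    rw [hM.mulVec_eigenvectorBasis, smul_smul, mul_comm]
  rw [hMx, dot_sum_right]
  refine Finset.sum_congr rfl fun j _ => ?_
  rw [dotProduct_smul, smul_eq_mul, dotProduct_comm]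
  have : dotProduct (⇑(f j)) x = c j := rfl
  rw [this]
  ring

lemma conjTranspose_real {m' n' : ℕ} (M : Matrix (Fin m') (Fin n') ℝ) : Mᴴ = Mᵀ := by
  ext i j
  simp [Matrix.conjTranspose_apply]

lemma herm_transpose {M : Matrix (Fin n) (Fin n) ℝ} (h : M.IsHermitian) : Mᵀ = M := by
  rw [← conjTranspose_real]; exact h

lemma psd_dot_nonneg {M : Matrix (Fin n) (Fin n) ℝ} (hM : M.PosSemidef) (x : Fin n → ℝ) :
    0 ≤ dotProduct x (M *ᵥ x) := by
  simpa [star_trivial] using hM.dotProduct_mulVec_nonneg x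

lemma dot_self_nonneg' (x : Fin n → ℝ) : 0 ≤ dotProduct x x :=
  Finset.sum_nonneg fun i _ => mul_self_nonneg (x i)

lemma onb_dot_self (b : OrthonormalBasis (Fin n) ℝ (EuclideanSpace ℝ (Fin n))) (i : Fin n) :
    dotProduct (⇑(b i)) (⇑(b i)) = 1 := by
  rw [← euclid_inner_dot]
  have h := b.orthonormal.1 i
  rw [real_inner_self_eq_norm_sq, h, one_pow]

lemma parseval_sq (b : OrthonormalBasis (Fin n) ℝ (EuclideanSpace ℝ (Fin n)))
    (y : EuclideanSpace ℝ (Fin n)) :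
    ∑ i, (dotProduct (⇑(b i)) (⇑y))^2 = dotProduct (⇑y) (⇑y) := by
  have key : dotProduct (⇑y) (∑ i, (dotProduct (⇑(b i)) (⇑y)) • ⇑(b i))
      = ∑ i, (dotProduct (⇑(b i)) (⇑y))^2 := by
    rw [dot_sum_right]
    refine Finset.sum_congr rfl fun i _ => ?_
    rw [dotProduct_smul, smul_eq_mul, dotProduct_comm]
    ring
  rw [onb_expand b y] at key
  exact key.symm

lemma mc_K {A C : Matrix (Fin n) (Fin n) ℝ} (hA : A.PosSemidef) (hC : C.PosSemidef)
    (hle : ∀ x : Fin n → ℝ, dotProduct x (A *ᵥ x) ≤ dotProduct x (C *ᵥ x))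
    (j : Fin n) {t : ℝ} (ht : 0 < t) :
    ∑ i, (dotProduct (⇑(hC.1.eigenvectorBasis i)) (⇑(hA.1.eigenvectorBasis j)))^2
        / (hC.1.eigenvalues i + t)
      ≤ 1 / (hA.1.eigenvalues j + t) := by
  set e := hC.1.eigenvectorBasis with he
  set f := hA.1.eigenvectorBasis with hf
  set μ := hC.1.eigenvalues with hμdef
  set lam := hA.1.eigenvalues j with hlamdef
  have hμ0 : ∀ i, 0 ≤ μ i := fun i => hC.eigenvalues_nonneg i
  have hlam0 : 0 ≤ lam := hA.eigenvalues_nonneg j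
  have hlamt : 0 < lam + t := by linarith
  set c : Fin n → ℝ := fun i => dotProduct (⇑(e i)) (⇑(f j)) with hcdef
  set g : Fin n → ℝ := ∑ i, ((μ i + t)⁻¹ * c i) • ⇑(e i) with hgdef
  have hμt : ∀ i, (0:ℝ) < μ i + t := fun i => by have := hμ0 i; linarith
  set θ := ∑ i, (c i)^2 / (μ i + t) with hθdef
  have hθ0 : 0 ≤ θ := Finset.sum_nonneg fun i _ => div_nonneg (sq_nonneg _) (hμt i).le
  -- θ = f j ⬝ᵥ g
  have hfg : dotProduct (⇑(f j)) g = θ := by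
    rw [hgdef, dot_sum_right]
    refine Finset.sum_congr rfl fun i _ => ?_
    rw [dotProduct_smul, smul_eq_mul, dotProduct_comm]
    have hci : dotProduct (⇑(e i)) (⇑(f j)) = c i := rfl
    rw [hci, div_eq_mul_inv]
    ring
  -- C *ᵥ g + t • g = f j
  have hCg : C *ᵥ g + t • g = ⇑(f j) := by
    have h1 : C *ᵥ g = ∑ i, ((μ i + t)⁻¹ * c i * μ i) • ⇑(e i) := by
      rw [hgdef, show C *ᵥ (∑ i, ((μ i + t)⁻¹ * c i) • ⇑(e i))
          = ∑ i, ((μ i + t)⁻¹ * c i) • (C *ᵥ ⇑(e i)) by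
        rw [← Matrix.mulVecLin_apply, map_sum]
        exact Finset.sum_congr rfl fun i _ => by simp [Matrix.mulVecLin_apply]]
      refine Finset.sum_congr rfl fun i _ => ?_
      rw [hC.1.mulVec_eigenvectorBasis, smul_smul]
    have h2 : t • g = ∑ i, ((μ i + t)⁻¹ * c i * t) • ⇑(e i) := by
      rw [hgdef, Finset.smul_sum]
      exact Finset.sum_congr rfl fun i _ => by rw [smul_smul]; congr 1; ring
    rw [h1, h2, ← Finset.sum_add_distrib]
    have h3 : ∀ i, ((μ i + t)⁻¹ * c i * μ i) • ⇑(e i) + ((μ i + t)⁻¹ * c i * t) • ⇑(e i)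
        = c i • ⇑(e i) := by
      intro i
      rw [← add_smul]
      congr 1
      have hne := (hμt i).ne'
      field_simp
    rw [Finset.sum_congr rfl fun i _ => h3 i]
    exact onb_expand e (f j)
  -- the PSD form M = A + t • 1
  set M : Matrix (Fin n) (Fin n) ℝ := A + t • (1 : Matrix (Fin n) (Fin n) ℝ) with hMdef
  have hMv : ∀ x : Fin n → ℝ, M *ᵥ x = A *ᵥ x + t • x := by
    intro x
    rw [hMdef, Matrix.add_mulVec, Matrix.smul_mulVec, Matrix.one_mulVec]
  have hMsymm : Mᵀ = M := by
    rw [hMdef, Matrix.transpose_add, Matrix.transpose_smul, Matrix.transpose_one,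
      herm_transpose hA.1]
  have hMpsd : ∀ x : Fin n → ℝ, 0 ≤ dotProduct x (M *ᵥ x) := by
    intro x
    rw [hMv, dotProduct_add, dotProduct_smul, smul_eq_mul]
    have := psd_dot_nonneg hA x
    have := dot_self_nonneg' x
    nlinarith
  have hMfj : M *ᵥ ⇑(f j) = (lam + t) • ⇑(f j) := by
    rw [hMv, hA.1.mulVec_eigenvectorBasis, ← add_smul]
  have hQff : dotProduct (⇑(f j)) (M *ᵥ ⇑(f j)) = lam + t := by
    rw [hMfj, dotProduct_smul, smul_eq_mul, onb_dot_self, mul_one]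
  have hQfg : dotProduct (⇑(f j)) (M *ᵥ g) = (lam + t) * θ := by
    rw [dot_mulVec_symm hMsymm, hMfj, dotProduct_smul, smul_eq_mul,
      dotProduct_comm, hfg]
  have hQgg : dotProduct g (M *ᵥ g) ≤ θ := by
    rw [hMv, dotProduct_add]
    have h1 : dotProduct g (A *ᵥ g) ≤ dotProduct g (C *ᵥ g) := hle g
    have h2 : dotProduct g (C *ᵥ g) + dotProduct g (t • g)
        = dotProduct g (⇑(f j)) := by
      rw [← dotProduct_add, hCg]
    have h3 : dotProduct g (⇑(f j)) = θ := by rw [dotProduct_comm, hfg]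
    linarith
  have hcs := cs_matrix hMsymm hMpsd (⇑(f j)) g
  rw [hQfg, hQff] at hcs
  -- ((lam+t)θ)² ≤ (lam+t) * Q(g,g) ≤ (lam+t) θ
  have hQgg0 : 0 ≤ dotProduct g (M *ᵥ g) := hMpsd g
  have key : ((lam + t) * θ)^2 ≤ (lam + t) * θ := by
    calc ((lam + t) * θ)^2 ≤ (lam + t) * dotProduct g (M *ᵥ g) := hcs
      _ ≤ (lam + t) * θ := by nlinarith
  have hθle : θ ≤ 1 / (lam + t) := by
    rcases eq_or_lt_of_le hθ0 with h0 | hpos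
    · rw [← h0]; positivity
    · rw [le_div_iff₀ hlamt]
      nlinarith
  calc ∑ i, (c i)^2 / (μ i + t) = θ := by rw [hθdef]
    _ ≤ 1 / (lam + t) := hθle

lemma rpow_split {x : ℝ} (hx : 0 ≤ x) {p : ℝ} (hp : 1 ≤ p) : x ^ p = x * x ^ (p-1) := by
  rcases eq_or_lt_of_le hx with h0 | hpos
  · rw [← h0, Real.zero_rpow (by linarith), zero_mul]
  · nth_rewrite 2 [← Real.rpow_one x]
    rw [← Real.rpow_add hpos]
    ring_nf

lemma mccarthy_half {A C : Matrix (Fin n) (Fin n) ℝ} (hA : A.PosSemidef) (hC : C.PosSemidef)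
    (hle : ∀ x : Fin n → ℝ, dotProduct x (A *ᵥ x) ≤ dotProduct x (C *ᵥ x))
    {p : ℝ} (hp : 1 ≤ p) :
    ∑ j, hA.1.eigenvalues j ^ p
      ≤ ∑ i, (hC.1.eigenvalues i) ^ (p-1)
          * (dotProduct (⇑(hC.1.eigenvectorBasis i)) (A *ᵥ ⇑(hC.1.eigenvectorBasis i))) := by
  set e := hC.1.eigenvectorBasis with he
  set f := hA.1.eigenvectorBasis with hf
  set μ := hC.1.eigenvalues with hμdef
  set lam := hA.1.eigenvalues with hlamdef
  have hμ0 : ∀ i, 0 ≤ μ i := fun i => hC.eigenvalues_nonneg i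
  have hlam0 : ∀ j, 0 ≤ lam j := fun j => hA.eigenvalues_nonneg j
  -- expand RHS
  have hrhs : ∀ i, (μ i) ^ (p-1)
      * (dotProduct (⇑(e i)) (A *ᵥ ⇑(e i)))
      = ∑ j, lam j * ((μ i) ^ (p-1) * (dotProduct (⇑(e i)) (⇑(f j)))^2) := by
    intro i
    rw [show dotProduct (⇑(e i)) (A *ᵥ ⇑(e i))
        = ∑ j, lam j * (dotProduct (⇑(f j)) (⇑(e i)))^2 from herm_qf_expand hA.1 _,
      Finset.mul_sum]
    refine Finset.sum_congr rfl fun j _ => ?_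
    rw [dotProduct_comm]
    ring
  rw [Finset.sum_congr rfl fun i _ => hrhs i, Finset.sum_comm]
  -- now per j
  apply Finset.sum_le_sum
  intro j _
  have hw1 : ∑ i, (dotProduct (⇑(e i)) (⇑(f j)))^2 = 1 := by
    rw [parseval_sq e (f j), onb_dot_self]
  have hmean : lam j ≤ ∑ i, (dotProduct (⇑(e i)) (⇑(f j)))^2 * μ i := by
    have h1 : dotProduct (⇑(f j)) (A *ᵥ ⇑(f j)) = lam j := by
      rw [hA.1.mulVec_eigenvectorBasis, dotProduct_smul, smul_eq_mul, onb_dot_self,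
        mul_one]
    have h2 : dotProduct (⇑(f j)) (C *ᵥ ⇑(f j))
        = ∑ i, μ i * (dotProduct (⇑(e i)) (⇑(f j)))^2 := herm_qf_expand hC.1 _
    have h3 := hle (⇑(f j))
    rw [h1, h2] at h3
    calc lam j ≤ ∑ i, μ i * (dotProduct (⇑(e i)) (⇑(f j)))^2 := h3
      _ = ∑ i, (dotProduct (⇑(e i)) (⇑(f j)))^2 * μ i :=
        Finset.sum_congr rfl fun i _ => by ring
  have hK : ∀ t : ℝ, 0 < t →
      ∑ i, (dotProduct (⇑(e i)) (⇑(f j)))^2 / (μ i + t) ≤ 1 / (lam j + t) :=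
    fun t ht => mc_K hA hC hle j ht
  have key := mc_weight_rpow (w := fun i => (dotProduct (⇑(e i)) (⇑(f j)))^2)
    (μv := μ) (fun i => sq_nonneg _) hμ0 hw1 (hlam0 j) hmean hK (s := p - 1) (by linarith)
  calc lam j ^ p = lam j * lam j ^ (p-1) := rpow_split (hlam0 j) hp
    _ ≤ lam j * (∑ i, (dotProduct (⇑(e i)) (⇑(f j)))^2 * μ i ^ (p-1)) :=
        mul_le_mul_of_nonneg_left key (hlam0 j)
    _ = ∑ i, lam j * (μ i ^ (p-1) * (dotProduct (⇑(e i)) (⇑(f j)))^2) := by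
        rw [Finset.mul_sum]
        exact Finset.sum_congr rfl fun i _ => by ring

lemma mccarthy {A B : Matrix (Fin n) (Fin n) ℝ} (hA : A.PosSemidef) (hB : B.PosSemidef)
    {p : ℝ} (hp : 1 ≤ p) :
    ∑ j, hA.1.eigenvalues j ^ p + ∑ j, hB.1.eigenvalues j ^ p
      ≤ ∑ i, (hA.add hB).1.eigenvalues i ^ p := by
  have hC : (A + B).PosSemidef := hA.add hB
  set e := hC.1.eigenvectorBasis with he
  set μ := hC.1.eigenvalues with hμdef
  have hμ0 : ∀ i, 0 ≤ μ i := fun i => hC.eigenvalues_nonneg i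
  have hsplit : ∀ i, μ i = dotProduct (⇑(e i)) (A *ᵥ ⇑(e i))
      + dotProduct (⇑(e i)) (B *ᵥ ⇑(e i)) := by
    intro i
    have h1 : dotProduct (⇑(e i)) ((A + B) *ᵥ ⇑(e i)) = μ i := by
      rw [hC.1.mulVec_eigenvectorBasis, dotProduct_smul, smul_eq_mul, onb_dot_self,
        mul_one]
    rw [← h1, Matrix.add_mulVec, dotProduct_add]
  have hRHS : ∑ i, μ i ^ p
      = ∑ i, μ i ^ (p-1) * (dotProduct (⇑(e i)) (A *ᵥ ⇑(e i)))
        + ∑ i, μ i ^ (p-1) * (dotProduct (⇑(e i)) (B *ᵥ ⇑(e i))) := by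
    rw [← Finset.sum_add_distrib]
    refine Finset.sum_congr rfl fun i _ => ?_
    rw [← mul_add, ← hsplit i, rpow_split (hμ0 i) hp]
    ring
  have hleA : ∀ x : Fin n → ℝ, dotProduct x (A *ᵥ x)
      ≤ dotProduct x ((A + B) *ᵥ x) := by
    intro x
    rw [Matrix.add_mulVec, dotProduct_add]
    have := psd_dot_nonneg hB x
    linarith
  have hleB : ∀ x : Fin n → ℝ, dotProduct x (B *ᵥ x)
      ≤ dotProduct x ((A + B) *ᵥ x) := by
    intro x
    rw [Matrix.add_mulVec, dotProduct_add]
    have := psd_dot_nonneg hA x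
    linarith
  have h1 := mccarthy_half hA hC hleA hp
  have h2 := mccarthy_half hB hC hleB hp
  rw [hRHS]
  exact add_le_add h1 h2

section Charpoly
open Polynomial

lemma scalar_comm' (A : Matrix (Fin n) (Fin n) ℝ[X]) (r : ℝ[X]) :
    A * Matrix.scalar (Fin n) r = Matrix.scalar (Fin n) r * A :=
  (Matrix.scalar_commute r (fun r' => Commute.all r r') A).symm

lemma charmatrix_conj (U V M : Matrix (Fin n) (Fin n) ℝ) (hUV : U * V = 1) :
    Matrix.charmatrix (U * M * V)
      = (U.map Polynomial.C) * Matrix.charmatrix M * (V.map Polynomial.C) := by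
  unfold Matrix.charmatrix
  rw [mul_sub, sub_mul]
  congr 1
  · symm
    rw [scalar_comm' (U.map Polynomial.C), Matrix.mul_assoc, ← Matrix.map_mul, hUV,
      Matrix.map_one Polynomial.C (map_zero _) (map_one _), Matrix.mul_one]
  · simp only [RingHom.mapMatrix_apply]
    rw [← Matrix.map_mul, ← Matrix.map_mul]

lemma charpoly_conj (U V M : Matrix (Fin n) (Fin n) ℝ) (hUV : U * V = 1) :
    (U * M * V).charpoly = M.charpoly := by
  unfold Matrix.charpoly
  rw [charmatrix_conj U V M hUV, Matrix.det_mul, Matrix.det_mul]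
  have : (U.map Polynomial.C).det * (V.map Polynomial.C).det = 1 := by
    rw [← Matrix.det_mul, ← Matrix.map_mul, hUV,
      Matrix.map_one Polynomial.C (map_zero _) (map_one _), Matrix.det_one]
  calc (U.map Polynomial.C).det * M.charmatrix.det * (V.map Polynomial.C).det
      = M.charmatrix.det * ((U.map Polynomial.C).det * (V.map Polynomial.C).det) := by ring
    _ = M.charmatrix.det := by rw [this, mul_one]

lemma charpoly_diag (d : Fin n → ℝ) :
    (Matrix.diagonal d).charpoly = ∏ i, (Polynomial.X - Polynomial.C (d i)) := by
  unfold Matrix.charpoly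
  have : Matrix.charmatrix (Matrix.diagonal d)
      = Matrix.diagonal (fun i => Polynomial.X - Polynomial.C (d i)) := by
    apply Matrix.ext
    intro i j
    by_cases h : i = j
    · subst h
      rw [Matrix.charmatrix_apply_eq, Matrix.diagonal_apply_eq, Matrix.diagonal_apply_eq]
    · rw [Matrix.charmatrix_apply_ne _ _ _ h, Matrix.diagonal_apply_ne _ h,
        Matrix.diagonal_apply_ne _ h, map_zero, neg_zero]
  rw [this, Matrix.det_diagonal]

lemma herm_charpoly {N : Matrix (Fin n) (Fin n) ℝ} (hN : N.IsHermitian) :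
    N.charpoly = ∏ i, (Polynomial.X - Polynomial.C (hN.eigenvalues i)) := by
  have hU := (Matrix.mem_unitaryGroup_iff).mp (hN.eigenvectorUnitary).2
  calc N.charpoly
      = ((hN.eigenvectorUnitary : Matrix (Fin n) (Fin n) ℝ)
          * Matrix.diagonal (RCLike.ofReal ∘ hN.eigenvalues)
          * (star (hN.eigenvectorUnitary : Matrix (Fin n) (Fin n) ℝ))).charpoly := by
        conv_lhs => rw [hN.spectral_theorem, Unitary.conjStarAlgAut_apply]
    _ = (Matrix.diagonal (RCLike.ofReal ∘ hN.eigenvalues)).charpoly :=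
        charpoly_conj _ _ _ hU
    _ = ∏ i, (Polynomial.X - Polynomial.C (hN.eigenvalues i)) := by
        rw [show Matrix.diagonal (RCLike.ofReal ∘ hN.eigenvalues)
            = Matrix.diagonal hN.eigenvalues by rw [RCLike.ofReal_real_eq_id, Function.id_comp], charpoly_diag]

lemma herm_roots {N : Matrix (Fin n) (Fin n) ℝ} (hN : N.IsHermitian) :
    N.charpoly.roots = Finset.univ.val.map hN.eigenvalues := by
  rw [herm_charpoly hN, ← Polynomial.roots_multiset_prod_X_sub_C
    (Finset.univ.val.map hN.eigenvalues)]
  congr 1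
  rw [Multiset.map_map, Finset.prod_eq_multiset_prod]
  rfl

lemma herm_sq_multiset {M : Matrix (Fin n) (Fin n) ℝ} (hM : M.IsHermitian)
    (hM2 : (M * M).IsHermitian) :
    Finset.univ.val.map hM2.eigenvalues
      = Finset.univ.val.map (fun i => hM.eigenvalues i ^ 2) := by
  have hU := (Matrix.mem_unitaryGroup_iff).mp (hM.eigenvectorUnitary).2
  have hU' := (Matrix.mem_unitaryGroup_iff').mp (hM.eigenvectorUnitary).2
  set U : Matrix (Fin n) (Fin n) ℝ := (hM.eigenvectorUnitary : Matrix (Fin n) (Fin n) ℝ)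
  set D : Matrix (Fin n) (Fin n) ℝ := Matrix.diagonal (RCLike.ofReal ∘ hM.eigenvalues)
  have hMM : M * M = U * (D * D) * star U := by
    have h := hM.spectral_theorem
    calc M * M = (U * D * star U) * (U * D * star U) := by rw [h, Unitary.conjStarAlgAut_apply]
      _ = U * D * ((star U * U) * (D * star U)) := by
          simp only [Matrix.mul_assoc]
      _ = U * (D * D) * star U := by
          rw [hU', Matrix.one_mul]
          simp only [Matrix.mul_assoc]
  have hDD : D * D = Matrix.diagonal (fun i => hM.eigenvalues i ^ 2) := by
    rw [show D = Matrix.diagonal hM.eigenvalues by congr, Matrix.diagonal_mul_diagonal]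
    congr 1
    funext i
    ring
  have hcp : (M * M).charpoly = ∏ i, (Polynomial.X - Polynomial.C (hM.eigenvalues i ^ 2)) := by
    rw [hMM, charpoly_conj _ _ _ hU, hDD, charpoly_diag]
  have h1 : (M * M).charpoly.roots = Finset.univ.val.map hM2.eigenvalues := herm_roots hM2
  have h2 : (M * M).charpoly.roots = Finset.univ.val.map (fun i => hM.eigenvalues i ^ 2) := by
    rw [hcp, ← Polynomial.roots_multiset_prod_X_sub_C
      (Finset.univ.val.map (fun i => hM.eigenvalues i ^ 2))]
    congr 1
    rw [Multiset.map_map, Finset.prod_eq_multiset_prod]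
    rfl
  rw [← h1, h2]

lemma herm_sq_sum (h : ℝ → ℝ) {M : Matrix (Fin n) (Fin n) ℝ} (hM : M.IsHermitian)
    (hM2 : (M * M).IsHermitian) :
    ∑ k, h (hM2.eigenvalues k) = ∑ k, h (hM.eigenvalues k ^ 2) := by
  rw [Finset.sum_eq_multiset_sum, Finset.sum_eq_multiset_sum,
    show Multiset.map (fun k => h (hM2.eigenvalues k)) Finset.univ.val
      = Multiset.map h (Multiset.map hM2.eigenvalues Finset.univ.val) by
        rw [Multiset.map_map]; rfl,
    show Multiset.map (fun k => h (hM.eigenvalues k ^ 2)) Finset.univ.val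
      = Multiset.map h (Multiset.map (fun i => hM.eigenvalues i ^ 2) Finset.univ.val) by
        rw [Multiset.map_map]; rfl,
    herm_sq_multiset hM hM2]

end Charpoly

lemma eig_congr {N N' : Matrix (Fin n) (Fin n) ℝ} (h : N = N') (hN : N.IsHermitian)
    (hN' : N'.IsHermitian) : hN.eigenvalues = hN'.eigenvalues := by
  subst h
  rfl


lemma sval_nonneg {m : ℕ} (A : Matrix (Fin m) (Fin n) ℝ) (i : ℕ) : 0 ≤ sval A i := by
  unfold sval
  split
  · exact Real.sqrt_nonneg _
  · exact le_refl 0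

lemma sval_sum_eq {m : ℕ} (M : Matrix (Fin m) (Fin n) ℝ) (p : ℝ) :
    ∑ i ∈ Finset.range n, sval M i ^ p
      = ∑ k : Fin n,
          Real.sqrt ((show (Mᵀ * M).IsHermitian by rw [← Matrix.conjTranspose_eq_transpose_of_trivial]; exact Matrix.isHermitian_conjTranspose_mul_self M).eigenvalues k) ^ p := by
  rw [← Fin.sum_univ_eq_sum_range]
  set E := (show (Mᵀ * M).IsHermitian by rw [← Matrix.conjTranspose_eq_transpose_of_trivial]; exact Matrix.isHermitian_conjTranspose_mul_self M).eigenvalues with hE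
  set σ := Tuple.sort E with hσ
  have hterm : ∀ k : Fin n, sval M (k : ℕ) = Real.sqrt (E (σ (Fin.rev k))) := by
    intro k
    unfold sval
    rw [dif_pos k.isLt]
    have harg : (⟨n - 1 - (k:ℕ), by omega⟩ : Fin n) = Fin.rev k := by
      apply Fin.ext
      rw [Fin.val_rev]
      show n - 1 - (k:ℕ) = n - ((k:ℕ)+1)
      omega
    rw [harg]
  rw [Finset.sum_congr rfl fun k _ => by rw [hterm k]]
  have := Equiv.sum_comp (Fin.revPerm.trans σ) (fun k => Real.sqrt (E k) ^ p)
  simpa using this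

lemma psd_sval_sum {M : Matrix (Fin n) (Fin n) ℝ} (hM : M.PosSemidef) (p : ℝ) :
    ∑ i ∈ Finset.range n, sval M i ^ p = ∑ k, hM.1.eigenvalues k ^ p := by
  rw [sval_sum_eq]
  have hM2 : (M * M).IsHermitian := by
    unfold Matrix.IsHermitian
    rw [Matrix.conjTranspose_mul, hM.1]
  have hMt : Mᵀ * M = M * M := by rw [herm_transpose hM.1]
  have hEeq : (show (Mᵀ * M).IsHermitian by rw [← Matrix.conjTranspose_eq_transpose_of_trivial]; exact Matrix.isHermitian_conjTranspose_mul_self M).eigenvalues = hM2.eigenvalues :=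
    eig_congr hMt _ _
  rw [show (∑ k : Fin n,
      Real.sqrt ((show (Mᵀ * M).IsHermitian by rw [← Matrix.conjTranspose_eq_transpose_of_trivial]; exact Matrix.isHermitian_conjTranspose_mul_self M).eigenvalues k) ^ p)
      = ∑ k : Fin n, Real.sqrt (hM2.eigenvalues k) ^ p by rw [hEeq]]
  rw [herm_sq_sum (fun x => Real.sqrt x ^ p) hM.1 hM2]
  refine Finset.sum_congr rfl fun k _ => ?_
  rw [Real.sqrt_sq (hM.eigenvalues_nonneg k)]

lemma schattenR_pow (M : Matrix (Fin n) (Fin n) ℝ) {p : ℝ} (hp : 0 < p) :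
    schattenR p M ^ p = ∑ i ∈ Finset.range n, sval M i ^ p := by
  unfold schattenR schattenTR
  have hS : 0 ≤ ∑ i ∈ Finset.range n, sval M i ^ p :=
    Finset.sum_nonneg fun i _ => Real.rpow_nonneg (sval_nonneg M i) p
  rw [← Real.rpow_mul hS, one_div_mul_cancel (ne_of_gt hp), Real.rpow_one]

end Aux

/-- `‖T₁ᵀT₁ + T₂ᵀT₂‖_p^p ≥ ‖T₁ᵀT₁‖_p^p + ‖T₂ᵀT₂‖_p^p` for `1 ≤ p < ∞`. -/
theorem schatten_gram_superadditive {m n : ℕ}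
    (T₁ T₂ : Matrix (Fin m) (Fin n) ℝ) (p : ℝ) (hp : 1 ≤ p) :
    schattenR p (T₁ᵀ * T₁) ^ p + schattenR p (T₂ᵀ * T₂) ^ p
      ≤ schattenR p (T₁ᵀ * T₁ + T₂ᵀ * T₂) ^ p := by
  have hp0 : (0:ℝ) < p := lt_of_lt_of_le one_pos hp
  have hA : (T₁ᵀ * T₁).PosSemidef := by
    have := Matrix.posSemidef_conjTranspose_mul_self T₁
    rwa [conjTranspose_real] at this
  have hB : (T₂ᵀ * T₂).PosSemidef := by
    have := Matrix.posSemidef_conjTranspose_mul_self T₂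
    rwa [conjTranspose_real] at this
  rw [schattenR_pow _ hp0, schattenR_pow _ hp0, schattenR_pow _ hp0,
    psd_sval_sum hA p, psd_sval_sum hB p, psd_sval_sum (hA.add hB) p]
  exact mccarthy hA hB hp
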